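/- arXiv:2106.00232 — 2 statements merged into one kernel-verified Lean document; each statement's English description precedes it below -/
import Mathlib

section
/- Let q be a positive integer, let A, B, C be pairwise disjoint finite sets with |A| = |B| = |C| = q, and let F ⊆ A × B × C. Construct the bipartite hypergraph instance with driver set D = A, rider set R = B ∪ C, and edge set E containing, for each triple f = (a,b,c) ∈ F, the three edges (a, {b,c}), (a, {b}) and (a, {c}). Then there exists a 3-dimensional matching M ⊆ F with |M| = q (i.e., a set of q triples that are pairwise disjoint in every coordinate: distinct triples (a,b,c), (a',b',c') ∈ M satisfy a ≠ a', b ≠ b' and c ≠ c') if and only if there exists a feasible set Γ of edges of E with |P(Γ)| = 2q. -/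
/-- 3-dimensional matching of size q exists iff the constructed
bipartite hypergraph instance has a feasible edge set covering 2q riders. -/
theorem stmt_0 {V : Type*} [DecidableEq V] (q : ℕ) (hq : 0 < q)
    (A B C : Finset V)
    (hAB : Disjoint A B) (hAC : Disjoint A C) (hBC : Disjoint B C)
    (hA : A.card = q) (hB : B.card = q) (hC : C.card = q)
    (F : Finset (V × V × V))
    (hF : ∀ f ∈ F, f.1 ∈ A ∧ f.2.1 ∈ B ∧ f.2.2 ∈ C)
    (E : Finset (V × Finset V))
    (hE : E = F.biUnion (fun f =>
      {(f.1, ({f.2.1, f.2.2} : Finset V)), (f.1, ({f.2.1} : Finset V)),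
       (f.1, ({f.2.2} : Finset V))})) :
    (∃ M ⊆ F, M.card = q ∧
        ∀ f ∈ M, ∀ f' ∈ M, f ≠ f' →
          f.1 ≠ f'.1 ∧ f.2.1 ≠ f'.2.1 ∧ f.2.2 ≠ f'.2.2) ↔
    (∃ Γ ⊆ E, (∀ e ∈ Γ, ∀ e' ∈ Γ, e ≠ e' → e.1 ≠ e'.1 ∧ Disjoint e.2 e'.2) ∧
        (Γ.biUnion Prod.snd).card = 2 * q) := by
  classical
  constructor
  · rintro ⟨M, hMF, hMcard, hM⟩
    set g : V × V × V → V × Finset V := fun f => (f.1, ({f.2.1, f.2.2} : Finset V)) with hg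
    have hdisj : ∀ f ∈ M, ∀ f' ∈ M, f ≠ f' →
        Disjoint ({f.2.1, f.2.2} : Finset V) ({f'.2.1, f'.2.2} : Finset V) := by
      intro f hf f' hf' hne
      obtain ⟨h1, h2, h3⟩ := hM f hf f' hf' hne
      obtain ⟨_, hb, hc⟩ := hF f (hMF hf)
      obtain ⟨_, hb', hc'⟩ := hF f' (hMF hf')
      rw [Finset.disjoint_left]
      intro x hx hx'
      simp only [Finset.mem_insert, Finset.mem_singleton] at hx hx'
      rcases hx with rfl | rfl <;> rcases hx' with h | h
      · exact h2 h
      · exact Finset.disjoint_left.mp hBC hb (h ▸ hc')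
      · exact Finset.disjoint_left.mp hBC hb' (h ▸ hc)
      · exact h3 h
    have hinj : Set.InjOn g M := by
      intro f hf f' hf' heq
      by_contra hne
      have := hdisj f hf f' hf' hne
      have hb : f.2.1 ∈ ({f.2.1, f.2.2} : Finset V) := by simp
      rw [show ({f.2.1, f.2.2} : Finset V) = ({f'.2.1, f'.2.2} : Finset V) from
        congrArg Prod.snd heq] at hb
      exact Finset.disjoint_right.mp this hb (by simp)
    refine ⟨M.image g, ?_, ?_, ?_⟩
    · intro e he
      simp only [Finset.mem_image] at he
      obtain ⟨f, hf, rfl⟩ := he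
      subst hE
      simp only [Finset.mem_biUnion]
      exact ⟨f, hMF hf, by simp [hg]⟩
    · intro e he e' he' hne
      simp only [Finset.mem_image] at he he'
      obtain ⟨f, hf, rfl⟩ := he
      obtain ⟨f', hf', rfl⟩ := he'
      have hff' : f ≠ f' := by rintro rfl; exact hne rfl
      exact ⟨(hM f hf f' hf' hff').1, hdisj f hf f' hf' hff'⟩
    · rw [Finset.image_biUnion]
      rw [Finset.card_biUnion (by
        intro f hf f' hf' hne
        exact hdisj f hf f' hf' hne)]
      have : ∀ f ∈ M, (({f.2.1, f.2.2} : Finset V)).card = 2 := by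
        intro f hf
        obtain ⟨_, hb, hc⟩ := hF f (hMF hf)
        rw [Finset.card_insert_of_notMem (by
          simp only [Finset.mem_singleton]
          intro h
          exact Finset.disjoint_left.mp hBC hb (h ▸ hc)), Finset.card_singleton]
      rw [Finset.sum_congr rfl this, Finset.sum_const, hMcard, smul_eq_mul, mul_comm]
  · rintro ⟨Γ, hΓE, hfeas, hcov⟩
    -- every edge's rider set is nonempty and of card ≤ 2, driver in A
    have hedge : ∀ e ∈ Γ, ∃ f ∈ F,
        e = (f.1, ({f.2.1, f.2.2} : Finset V)) ∨ e = (f.1, ({f.2.1} : Finset V))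
          ∨ e = (f.1, ({f.2.2} : Finset V)) := by
      intro e he
      have := hΓE he
      rw [hE] at this
      simp only [Finset.mem_biUnion, Finset.mem_insert, Finset.mem_singleton] at this
      obtain ⟨f, hf, h⟩ := this
      exact ⟨f, hf, h⟩
    have hfstA : ∀ e ∈ Γ, e.1 ∈ A := by
      intro e he
      obtain ⟨f, hf, h⟩ := hedge e he
      rcases h with rfl | rfl | rfl <;> exact (hF f hf).1
    have hcard2 : ∀ e ∈ Γ, e.2.card ≤ 2 := by
      intro e he
      obtain ⟨f, hf, h⟩ := hedge e he
      rcases h with rfl | rfl | rfl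
      · exact (Finset.card_insert_le _ _).trans (by simp)
      · simp
      · simp
    have hΓq : Γ.card ≤ q := by
      have hinj : Set.InjOn (Prod.fst : V × Finset V → V) ↑Γ := by
        intro e he e' he' heq
        by_contra hne
        exact (hfeas e he e' he' hne).1 heq
      calc Γ.card = (Γ.image Prod.fst).card := (Finset.card_image_of_injOn hinj).symm
        _ ≤ A.card := Finset.card_le_card (fun x hx => by
            obtain ⟨e, he, rfl⟩ := Finset.mem_image.mp hx
            exact hfstA e he)
        _ = q := hA
    have hsum : ∑ e ∈ Γ, e.2.card = 2 * q := by
      rw [← hcov]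
      exact (Finset.card_biUnion (fun e he e' he' hne =>
        (hfeas e he e' he' hne).2)).symm
    have hsumle : ∑ e ∈ Γ, e.2.card ≤ 2 * Γ.card := by
      calc ∑ e ∈ Γ, e.2.card ≤ ∑ _e ∈ Γ, 2 := Finset.sum_le_sum hcard2
        _ = 2 * Γ.card := by rw [Finset.sum_const, smul_eq_mul, mul_comm]
    have hΓcard : Γ.card = q := le_antisymm hΓq (by omega)
    have hall2 : ∀ e ∈ Γ, e.2.card = 2 := by
      by_contra h
      push_neg at h
      obtain ⟨e, he, hne⟩ := h
      have hlt : e.2.card < 2 := lt_of_le_of_ne (hcard2 e he) hne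
      have : ∑ e ∈ Γ, e.2.card < ∑ _e ∈ Γ, 2 :=
        Finset.sum_lt_sum (fun i hi => hcard2 i hi) ⟨e, he, hlt⟩
      rw [Finset.sum_const, smul_eq_mul] at this
      omega
    -- each edge in Γ is a pair edge coming from a unique f ∈ F
    have hpair : ∀ e ∈ Γ, ∃ f ∈ F, e = (f.1, ({f.2.1, f.2.2} : Finset V)) := by
      intro e he
      obtain ⟨f, hf, h⟩ := hedge e he
      rcases h with rfl | rfl | rfl
      · exact ⟨f, hf, rfl⟩
      · have := hall2 _ he; simp at this
      · have := hall2 _ he; simp at this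
    set M := F.filter (fun f => (f.1, ({f.2.1, f.2.2} : Finset V)) ∈ Γ) with hMdef
    set g : V × V × V → V × Finset V := fun f => (f.1, ({f.2.1, f.2.2} : Finset V)) with hg
    have hginj : Set.InjOn g M := by
      intro f hf f' hf' heq
      have hfF : f ∈ F := Finset.mem_filter.mp hf |>.1
      have hf'F : f' ∈ F := Finset.mem_filter.mp hf' |>.1
      obtain ⟨_, hb, hc⟩ := hF f hfF
      obtain ⟨_, hb', hc'⟩ := hF f' hf'F
      simp only [hg, Prod.mk.injEq] at heq
      obtain ⟨h1, h2⟩ := heq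
      have hbb : f.2.1 = f'.2.1 := by
        have : f.2.1 ∈ ({f'.2.1, f'.2.2} : Finset V) := h2 ▸ (by simp)
        simp only [Finset.mem_insert, Finset.mem_singleton] at this
        rcases this with h | h
        · exact h
        · exact absurd (h ▸ hc') (fun hcontra => Finset.disjoint_left.mp hBC hb hcontra)
      have hcc : f.2.2 = f'.2.2 := by
        have : f.2.2 ∈ ({f'.2.1, f'.2.2} : Finset V) := h2 ▸ (by simp)
        simp only [Finset.mem_insert, Finset.mem_singleton] at this
        rcases this with h | h
        · exact absurd (h ▸ hb') (fun hcontra => Finset.disjoint_left.mp hBC hcontra hc)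
        · exact h
      exact Prod.ext h1 (Prod.ext hbb hcc)
    have himg : M.image g = Γ := by
      apply Finset.Subset.antisymm
      · intro e he
        obtain ⟨f, hf, rfl⟩ := Finset.mem_image.mp he
        exact (Finset.mem_filter.mp hf).2
      · intro e he
        obtain ⟨f, hf, rfl⟩ := hpair e he
        exact Finset.mem_image.mpr ⟨f, Finset.mem_filter.mpr ⟨hf, he⟩, rfl⟩
    have hMcard : M.card = q := by
      rw [← hΓcard, ← himg, Finset.card_image_of_injOn hginj]
    refine ⟨M, Finset.filter_subset _ _, hMcard, ?_⟩
    intro f hf f' hf' hne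
    have hgfne : g f ≠ g f' := fun h => hne (hginj hf hf' h)
    have hgf : g f ∈ Γ := (Finset.mem_filter.mp hf).2
    have hgf' : g f' ∈ Γ := (Finset.mem_filter.mp hf').2
    obtain ⟨h1, h2⟩ := hfeas (g f) hgf (g f') hgf' hgfne
    refine ⟨h1, ?_, ?_⟩
    · intro h
      have hm : f.2.1 ∈ (g f).2 := by simp [hg]
      have hm' : f.2.1 ∈ (g f').2 := by simp [hg, h]
      exact Finset.disjoint_left.mp h2 hm hm'
    · intro h
      have hm : f.2.2 ∈ (g f).2 := by simp [hg]
      have hm' : f.2.2 ∈ (g f').2 := by simp [hg, h]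
      exact Finset.disjoint_left.mp h2 hm hm'
end

section
/- Let p ≥ 1, let t_1, …, t_p be nonnegative real travel times (t_y is the travel time from location l_{y-1} to l_y), let α_0 be the driver's earliest departure time and α_1, …, α_p the passengers' earliest departure times at their pick-up locations l_1, …, l_p. For a departure time τ ≥ α_0, define the departure time from each location recursively by D_0(τ) = τ and D_y(τ) = max(D_{y-1}(τ) + t_y, α_y) for 1 ≤ y ≤ p, so that D_p(τ) − τ is the driver's total travel time to reach l_p when departing at time τ. Let τ* = max(α_0, max_{1 ≤ y ≤ p} (α_y − (t_1 + ⋯ + t_y))). Then τ* ≥ α_0, D_p(τ*) − τ* = t_1 + ⋯ + t_p, and for every τ ≥ α_0, D_p(τ*) − τ* ≤ D_p(τ) − τ; that is, the latest departure time τ* minimizes the driver's total travel time to reach l_p. -/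
/-- Departure time from location `y` when the driver departs the origin at
time `τ`: the driver travels `t y` from location `y-1` to location `y` and
cannot depart location `y` before the passenger's earliest departure time
`α y`, waiting there if arriving early. -/
noncomputable def Dep (t α : ℕ → ℝ) (τ : ℝ) : ℕ → ℝ
  | 0 => τ
  | (y + 1) => max (Dep t α τ y + t (y + 1)) (α (y + 1))

/-! Waiting only delays the driver, so `Dep t α τ y` is at least the arrival time `τ + ∑ t`
without waits; when no passenger's `α z` exceeds that arrival time, there is no waiting at all.
The latest departure `τs` is exactly the least `τ ≥ α 0` with this property. -/

theorem add_sum_le_Dep (t α : ℕ → ℝ) (τ : ℝ) (y : ℕ) :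
    τ + ∑ z ∈ Finset.Icc 1 y, t z ≤ Dep t α τ y := by
  induction y with
  | zero => simp [Dep]
  | succ n ih =>
    rw [Finset.sum_Icc_succ_top (by omega), ← add_assoc]
    exact (add_le_add_left ih _).trans (le_max_left _ _)

theorem Dep_eq_add_sum (t α : ℕ → ℝ) (τ : ℝ) (y : ℕ)
    (hα : ∀ z ∈ Finset.Icc 1 y, α z - ∑ w ∈ Finset.Icc 1 z, t w ≤ τ) :
    Dep t α τ y = τ + ∑ z ∈ Finset.Icc 1 y, t z := by
  induction y with
  | zero => simp [Dep]
  | succ n ih =>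
    have hαn : α (n + 1) - ∑ w ∈ Finset.Icc 1 (n + 1), t w ≤ τ :=
      hα (n + 1) (Finset.right_mem_Icc.2 (by omega))
    rw [Finset.sum_Icc_succ_top (by omega)] at hαn ⊢
    rw [Dep, ih fun z hz => hα z (Finset.Icc_subset_Icc_right n.le_succ hz), ← add_assoc]
    exact max_eq_left (by linarith)

theorem stmt_2_general (p : ℕ) (hp : 1 ≤ p) (t α : ℕ → ℝ)
    (τs : ℝ)
    (hτs : τs = max (α 0) ((Finset.Icc 1 p).sup' (Finset.nonempty_Icc.mpr hp)
      (fun y => α y - ∑ z ∈ Finset.Icc 1 y, t z))) :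
    α 0 ≤ τs ∧
    Dep t α τs p - τs = ∑ y ∈ Finset.Icc 1 p, t y ∧
    ∀ τ, α 0 ≤ τ → Dep t α τs p - τs ≤ Dep t α τ p - τ := by
  have hα0 : α 0 ≤ τs := hτs ▸ le_max_left _ _
  have hno_wait : Dep t α τs p = τs + ∑ y ∈ Finset.Icc 1 p, t y :=
    Dep_eq_add_sum t α τs p ((Finset.sup'_le_iff _ _).1 (hτs ▸ le_max_right _ _))
  refine ⟨hα0, by rw [hno_wait]; ring, fun τ _ => ?_⟩
  linarith [add_sum_le_Dep t α τ p]

/-- the latest departure time `τ*` is at least `α 0`, yields a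
total travel time to `l_p` equal to `t_1 + ⋯ + t_p`, and minimizes the
driver's total travel time to reach `l_p` among all departure times `τ ≥ α 0`. -/
theorem stmt_2 (p : ℕ) (hp : 1 ≤ p) (t α : ℕ → ℝ)
    (ht : ∀ y, 1 ≤ y → y ≤ p → 0 ≤ t y)
    (τs : ℝ)
    (hτs : τs = max (α 0) ((Finset.Icc 1 p).sup' (Finset.nonempty_Icc.mpr hp)
      (fun y => α y - ∑ z ∈ Finset.Icc 1 y, t z))) :
    α 0 ≤ τs ∧
    Dep t α τs p - τs = ∑ y ∈ Finset.Icc 1 p, t y ∧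
    ∀ τ, α 0 ≤ τ → Dep t α τs p - τs ≤ Dep t α τ p - τ :=
  stmt_2_general p hp t α τs hτs
end
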